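/- arXiv:1606.09331 — 2 statements merged into one kernel-verified Lean document; each statement's English description precedes it below -/
import Mathlib

section
/- Let AB be a composite of euclidean Jordan algebras A and B. Then for all a ∈ A and b ∈ B, the elements a ⊗ u_B and u_A ⊗ b operator commute in AB: L_{a⊗u_B} ∘ L_{u_A⊗b} = L_{u_A⊗b} ∘ L_{a⊗u_B}. -/
open RealInnerProductSpace

/-- A euclidean Jordan algebra: a finite-dimensional real inner product space with a
commutative bilinear product with unit, satisfying the Jordan identity and
`⟪a ∘ b, c⟫ = ⟪b, a ∘ c⟫`. -/
structure EJA (A : Type*) [NormedAddCommGroup A] [InnerProductSpace ℝ A]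
    [FiniteDimensional ℝ A] where
  jmul : A →ₗ[ℝ] A →ₗ[ℝ] A
  comm : ∀ a b : A, jmul a b = jmul b a
  unit : A
  unit_jmul : ∀ a : A, jmul unit a = a
  jordan : ∀ a b : A, jmul (jmul a a) (jmul a b) = jmul a (jmul (jmul a a) b)
  assoc_inner : ∀ a b c : A, ⟪jmul a b, c⟫ = ⟪b, jmul a c⟫

variable {A : Type*} [NormedAddCommGroup A] [InnerProductSpace ℝ A] [FiniteDimensional ℝ A]

/-- The positive cone of a euclidean Jordan algebra: the set of squares. -/
def EJA.pos (J : EJA A) : Set A := {x | ∃ a : A, J.jmul a a = x}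

/-- A state: a positive linear functional normalized at the unit. -/
def EJA.IsState (J : EJA A) (α : A →ₗ[ℝ] ℝ) : Prop :=
  (∀ x ∈ J.pos, 0 ≤ α x) ∧ α J.unit = 1

namespace EJA
variable (J : EJA A)

/-- linearization (2,1) of the Jordan identity -/
lemma lin1 (x z w : A) :
    (2:ℝ) • J.jmul (J.jmul x z) (J.jmul x w) + J.jmul (J.jmul x x) (J.jmul z w)
      = (2:ℝ) • J.jmul x (J.jmul (J.jmul x z) w) + J.jmul z (J.jmul (J.jmul x x) w) := by
  have h1 := J.jordan (x + z) w
  have h2 := J.jordan (x - z) w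
  have h3 := J.jordan z w
  have hc : J.jmul z x = J.jmul x z := J.comm z x
  simp only [map_add, map_sub, LinearMap.add_apply, LinearMap.sub_apply, hc] at h1 h2
  have key : (4:ℝ) • ((2:ℝ) • J.jmul (J.jmul x z) (J.jmul x w) + J.jmul (J.jmul x x) (J.jmul z w))
      = (4:ℝ) • ((2:ℝ) • J.jmul x (J.jmul (J.jmul x z) w) + J.jmul z (J.jmul (J.jmul x x) w)) := by
    linear_combination (norm := module) (2:ℝ) • h1 - (2:ℝ) • h2 - (4:ℝ) • h3
  exact smul_right_injective _ (by norm_num : (4:ℝ) ≠ 0) key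
/-- full trilinear linearization -/
lemma linH (x y z w : A) :
    J.jmul (J.jmul x y) (J.jmul z w) + J.jmul (J.jmul y z) (J.jmul x w)
      + J.jmul (J.jmul x z) (J.jmul y w)
      = J.jmul x (J.jmul (J.jmul y z) w) + J.jmul y (J.jmul (J.jmul x z) w)
        + J.jmul z (J.jmul (J.jmul x y) w) := by
  have h1 := J.lin1 (x + y) z w
  have h2 := J.lin1 (x - y) z w
  have hc1 : J.jmul y x = J.jmul x y := J.comm y x
  simp only [map_add, map_sub, LinearMap.add_apply, LinearMap.sub_apply, hc1] at h1 h2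
  have key : (4:ℝ) • (J.jmul (J.jmul x y) (J.jmul z w) + J.jmul (J.jmul y z) (J.jmul x w)
      + J.jmul (J.jmul x z) (J.jmul y w))
      = (4:ℝ) • (J.jmul x (J.jmul (J.jmul y z) w) + J.jmul y (J.jmul (J.jmul x z) w)
        + J.jmul z (J.jmul (J.jmul x y) w)) := by
    linear_combination (norm := module) h1 - h2
  exact smul_right_injective _ (by norm_num : (4:ℝ) ≠ 0) key
lemma starp (x y w : A) :
    J.jmul (J.jmul x (J.jmul x y)) w
      = (2:ℝ) • J.jmul (J.jmul x y) (J.jmul x w) + J.jmul (J.jmul x x) (J.jmul y w)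
        - J.jmul x (J.jmul x (J.jmul y w)) - J.jmul y (J.jmul x (J.jmul x w)) := by
  have h := J.linH x y w x
  have c1 : J.jmul w x = J.jmul x w := J.comm w x
  have c2 : J.jmul (J.jmul y w) (J.jmul x x) = J.jmul (J.jmul x x) (J.jmul y w) := J.comm _ _
  have c3 : J.jmul y x = J.jmul x y := J.comm y x
  have c4 : J.jmul (J.jmul x w) (J.jmul x y) = J.jmul (J.jmul x y) (J.jmul x w) := J.comm _ _
  have c5 : J.jmul (J.jmul y w) x = J.jmul x (J.jmul y w) := J.comm _ _
  have c6 : J.jmul (J.jmul x w) x = J.jmul x (J.jmul x w) := J.comm _ _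
  have c7 : J.jmul (J.jmul x y) x = J.jmul x (J.jmul x y) := J.comm _ _
  have c8 : J.jmul w (J.jmul x (J.jmul x y)) = J.jmul (J.jmul x (J.jmul x y)) w := J.comm _ _
  rw [c1, c2, c3, c4, c5, c6, c7, c8] at h
  linear_combination (norm := module) -h
/-- powers of an element -/
def pw (a : A) : ℕ → A
  | 0 => J.unit
  | n+1 => J.jmul a (pw a n)

@[simp] lemma pw_zero (a : A) : J.pw a 0 = J.unit := rfl
lemma pw_succ (a : A) (n : ℕ) : J.pw a (n+1) = J.jmul a (J.pw a n) := rfl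
lemma pw_one (a : A) : J.pw a 1 = a := by
  rw [pw_succ, pw_zero, J.comm]; exact J.unit_jmul a
lemma pw_two (a : A) : J.pw a 2 = J.jmul a a := by rw [pw_succ, pw_one]

lemma rec' (a : A) (n : ℕ) (w : A) :
    J.jmul (J.pw a (n+2)) w
      = (2:ℝ) • J.jmul (J.pw a (n+1)) (J.jmul a w)
        + J.jmul (J.jmul a a) (J.jmul (J.pw a n) w)
        - J.jmul a (J.jmul a (J.jmul (J.pw a n) w))
        - J.jmul (J.pw a n) (J.jmul a (J.jmul a w)) := by
  have h := J.starp a (J.pw a n) w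
  rw [J.pw_succ a (n+1), J.pw_succ a n]
  exact h

lemma comm_pow_base (a : A) : ∀ n : ℕ,
    (∀ w, J.jmul (J.pw a n) (J.jmul a w) = J.jmul a (J.jmul (J.pw a n) w)) ∧
    (∀ w, J.jmul (J.pw a n) (J.jmul (J.jmul a a) w)
        = J.jmul (J.jmul a a) (J.jmul (J.pw a n) w)) := by
  intro n
  induction n using Nat.strong_induction_on with
  | _ n ih =>
    match n with
    | 0 => constructor <;> intro w <;> simp [pw_zero, J.unit_jmul]
    | 1 =>
      rw [pw_one]
      exact ⟨fun w => rfl, fun w => (J.jordan a w).symm⟩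
    | (k+2) =>
      obtain ⟨ih1a, ih1b⟩ := ih k (by omega)
      obtain ⟨ih2a, ih2b⟩ := ih (k+1) (by omega)
      have jl : ∀ u, J.jmul (J.jmul a a) (J.jmul a u) = J.jmul a (J.jmul (J.jmul a a) u) :=
        J.jordan a
      constructor
      · intro w
        rw [J.rec' a k (J.jmul a w), J.rec' a k w]
        simp only [map_add, map_sub, map_smul]
        have b1 := ih2a (J.jmul a w)
        have b2 := ih1a w
        have b3 := congrArg (⇑(J.jmul (J.jmul a a))) b2
        have b4 := jl (J.jmul (J.pw a k) w)
        have b5 := congrArg (fun u => J.jmul a (J.jmul a u)) b2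
        have b6 := ih1a (J.jmul a (J.jmul a w))
        linear_combination (norm := module) (2:ℝ) • b1 + b3 + b4 - b5 - b6
      · intro w
        rw [J.rec' a k (J.jmul (J.jmul a a) w), J.rec' a k w]
        simp only [map_add, map_sub, map_smul]
        have g1 : J.jmul a (J.jmul (J.jmul a a) w) = J.jmul (J.jmul a a) (J.jmul a w) :=
          (jl w).symm
        have e1 := congrArg (⇑(J.jmul (J.pw a (k+1)))) g1
        have e2 := ih2b (J.jmul a w)
        have e3 := ih1b w
        have e4 := congrArg (⇑(J.jmul (J.jmul a a))) e3
        have e5 := congrArg (fun u => J.jmul a (J.jmul a u)) e3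
        have e6 : J.jmul a (J.jmul (J.jmul a a) (J.jmul (J.pw a k) w))
            = J.jmul (J.jmul a a) (J.jmul a (J.jmul (J.pw a k) w)) := (jl _).symm
        have e7 := congrArg (⇑(J.jmul a)) e6
        have e8 : J.jmul a (J.jmul (J.jmul a a) (J.jmul a (J.jmul (J.pw a k) w)))
            = J.jmul (J.jmul a a) (J.jmul a (J.jmul a (J.jmul (J.pw a k) w))) := (jl _).symm
        have e9a := congrArg (⇑(J.jmul a)) g1
        have e9b : J.jmul a (J.jmul (J.jmul a a) (J.jmul a w))
            = J.jmul (J.jmul a a) (J.jmul a (J.jmul a w)) := (jl _).symm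
        have e10 := congrArg (⇑(J.jmul (J.pw a k))) (e9a.trans e9b)
        have e11 := ih1b (J.jmul a (J.jmul a w))
        linear_combination (norm := module) (2:ℝ) • e1 + (2:ℝ) • e2 + e4 - e5 - e7 - e8
          - e10 - e11

lemma comm_pow_a (a : A) (n : ℕ) (w : A) :
    J.jmul (J.pw a n) (J.jmul a w) = J.jmul a (J.jmul (J.pw a n) w) :=
  (J.comm_pow_base a n).1 w

lemma comm_pow_aa (a : A) (n : ℕ) (w : A) :
    J.jmul (J.pw a n) (J.jmul (J.jmul a a) w)
      = J.jmul (J.jmul a a) (J.jmul (J.pw a n) w) :=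
  (J.comm_pow_base a n).2 w

lemma comm_pow_pow (a : A) : ∀ m n : ℕ, ∀ w : A,
    J.jmul (J.pw a m) (J.jmul (J.pw a n) w) = J.jmul (J.pw a n) (J.jmul (J.pw a m) w) := by
  intro m
  induction m using Nat.strong_induction_on with
  | _ m ih =>
    match m with
    | 0 => intro n w; simp [pw_zero, J.unit_jmul]
    | 1 => intro n w; rw [pw_one]; exact (J.comm_pow_a a n w).symm
    | (k+2) =>
      intro n w
      have ihk := ih k (by omega)
      have ihk1 := ih (k+1) (by omega)
      rw [J.rec' a k (J.jmul (J.pw a n) w), J.rec' a k w]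
      simp only [map_add, map_sub, map_smul]
      have cpa := J.comm_pow_a a n
      have cpaa := J.comm_pow_aa a n
      have d1 : J.jmul a (J.jmul (J.pw a n) w) = J.jmul (J.pw a n) (J.jmul a w) :=
        (cpa w).symm
      have d2 := congrArg (⇑(J.jmul (J.pw a (k+1)))) d1
      have d3 := ihk1 n (J.jmul a w)
      have d4 := ihk n w
      have d5 := congrArg (⇑(J.jmul (J.jmul a a))) d4
      have d6 := (cpaa (J.jmul (J.pw a k) w)).symm
      have d7 := congrArg (fun u => J.jmul a (J.jmul a u)) d4
      have d8 := (cpa (J.jmul (J.pw a k) w)).symm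
      have d9 := congrArg (⇑(J.jmul a)) d8
      have d10 := (cpa (J.jmul a (J.jmul (J.pw a k) w))).symm
      have d11a := congrArg (⇑(J.jmul a)) d1
      have d11b := (cpa (J.jmul a w)).symm
      have d12 := congrArg (⇑(J.jmul (J.pw a k))) (d11a.trans d11b)
      have d13 := ihk n (J.jmul a (J.jmul a w))
      linear_combination (norm := module) (2:ℝ) • d2 + (2:ℝ) • d3 + d5 + d6 - d7 - d9
        - d10 - d12 - d13

lemma pw_mul (a : A) (i j : ℕ) : J.jmul (J.pw a i) (J.pw a j) = J.pw a (i + j) := by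
  induction j with
  | zero => rw [pw_zero, J.comm]; exact J.unit_jmul _
  | succ j ihj =>
    rw [pw_succ, show i + (j+1) = (i+j)+1 from by omega, pw_succ, ← ihj,
      J.comm_pow_a a i (J.pw a j)]

/-- the subalgebra (as a submodule) generated by `a` and the unit -/
def sba (a : A) : Submodule ℝ A := Submodule.span ℝ (Set.range (J.pw a))

lemma pw_mem (a : A) (n : ℕ) : J.pw a n ∈ J.sba a :=
  Submodule.subset_span ⟨n, rfl⟩

lemma jmul_a_mem (a : A) : ∀ x ∈ J.sba a, J.jmul a x ∈ J.sba a := by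
  intro x hx
  induction hx using Submodule.span_induction with
  | mem x hx => obtain ⟨n, rfl⟩ := hx; exact J.pw_mem a (n+1)
  | zero => simp
  | add x y _ _ hx hy => rw [map_add]; exact (J.sba a).add_mem hx hy
  | smul c x _ hx => rw [map_smul]; exact (J.sba a).smul_mem c hx

lemma assoc_sba (a : A) : ∀ x ∈ J.sba a, ∀ y ∈ J.sba a,
    J.jmul a (J.jmul x y) = J.jmul (J.jmul a x) y := by
  intro x hx
  induction hx using Submodule.span_induction with
  | mem x hx =>
    obtain ⟨i, rfl⟩ := hx
    intro y hy
    induction hy using Submodule.span_induction with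
    | mem y hy =>
      obtain ⟨j, rfl⟩ := hy
      rw [J.pw_mul a i j, show J.jmul a (J.pw a (i+j)) = J.pw a (i+j+1) from rfl,
        show J.jmul a (J.pw a i) = J.pw a (i+1) from rfl, J.pw_mul a (i+1) j,
        show i+1+j = i+j+1 from by omega]
    | zero => simp
    | add y z _ _ hy hz => simp only [map_add, hy, hz]
    | smul c y _ hy => simp only [map_smul, hy]
  | zero => intro y hy; simp
  | add x z _ _ hx hz =>
    intro y hy
    simp only [map_add, LinearMap.add_apply, hx y hy, hz y hy]
  | smul c x _ hx =>
    intro y hy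
    simp only [map_smul, LinearMap.smul_apply, hx y hy]

/-- the spectral decomposition of an element of a euclidean Jordan algebra -/
lemma spectral (a : A) : ∃ (R : Finset ℝ) (p : ℝ → A),
    (∀ r ∈ R, J.jmul (p r) (p r) = p r) ∧
    (∀ r s, r ≠ s → J.jmul (p r) (p s) = 0) ∧
    (∑ r ∈ R, p r) = J.unit ∧ (∑ r ∈ R, r • p r) = a := by
  classical
  set W := J.sba a with hW
  set T : W →ₗ[ℝ] W := (J.jmul a).restrict (J.jmul_a_mem a) with hT
  have hTsymm : T.IsSymmetric := by
    intro x y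
    have := J.assoc_inner a (x : A) (y : A)
    simpa [Submodule.coe_inner, hT, LinearMap.restrict_apply] using this
  set d := Module.finrank ℝ W with hd
  set b := hTsymm.eigenvectorBasis rfl with hb
  set μ := hTsymm.eigenvalues (n := d) rfl with hμ
  have heig : ∀ i, T (b i) = μ i • b i := fun i => hTsymm.apply_eigenvectorBasis rfl i
  have hunitW : J.unit ∈ W := J.pw_mem a 0
  set uW : W := ⟨J.unit, hunitW⟩ with huW
  set c : Fin d → ℝ := fun i => b.repr uW i with hc
  set v : ℝ → W := fun r => ∑ i ∈ Finset.univ.filter (fun i => μ i = r), c i • b i with hv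
  set p : ℝ → A := fun r => ((v r : W) : A) with hp
  set R : Finset ℝ := Finset.image μ Finset.univ with hR
  -- eigen property
  have heigp : ∀ r, J.jmul a (p r) = r • p r := by
    intro r
    have hTv : T (v r) = r • v r := by
      rw [hv]
      simp only [map_sum, map_smul]
      rw [Finset.smul_sum]
      apply Finset.sum_congr rfl
      intro i hi
      rw [heig i, (Finset.mem_filter.mp hi).2, smul_comm]
    have := congrArg (Subtype.val) hTv
    simpa [hp, hT, LinearMap.restrict_apply] using this
  have hpmem : ∀ r, p r ∈ W := fun r => (v r).2
  -- sum is the unit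
  have hsum : (∑ r ∈ R, p r) = J.unit := by
    have : (∑ r ∈ R, v r) = uW := by
      rw [hR, hv]
      exact (Finset.sum_image' (g := μ)
        (f := fun r => ∑ i ∈ Finset.filter (fun i => μ i = r) Finset.univ, c i • b i)
        (fun i => c i • b i) (fun i _ => rfl)).trans (b.sum_repr uW)
    have := congrArg (Subtype.val) this
    simpa [hp] using this
  -- orthogonality
  have horth : ∀ r s, r ≠ s → J.jmul (p r) (p s) = 0 := by
    intro r s hrs
    have h1 : J.jmul a (J.jmul (p r) (p s)) = r • J.jmul (p r) (p s) := by
      rw [J.assoc_sba a (p r) (hpmem r) (p s) (hpmem s), heigp r, map_smul,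
        LinearMap.smul_apply]
    have h2 : J.jmul a (J.jmul (p r) (p s)) = s • J.jmul (p r) (p s) := by
      rw [J.comm (p r) (p s), J.assoc_sba a (p s) (hpmem s) (p r) (hpmem r), heigp s,
        map_smul, LinearMap.smul_apply, J.comm (p s) (p r)]
    have h3 : (r - s) • J.jmul (p r) (p s) = 0 := by
      rw [sub_smul, ← h1, ← h2, sub_self]
    rcases smul_eq_zero.mp h3 with h | h
    · exact absurd (sub_eq_zero.mp h) hrs
    · exact h
  -- idempotents
  have hidem : ∀ r ∈ R, J.jmul (p r) (p r) = p r := by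
    intro r hr
    have : J.jmul (p r) (∑ s ∈ R, p s) = p r := by
      rw [hsum, J.comm, J.unit_jmul]
    rw [map_sum, Finset.sum_eq_single_of_mem r hr
      (fun s _ hs => horth r s (Ne.symm hs))] at this
    exact this
  -- spectral sum
  have hsuma : (∑ r ∈ R, r • p r) = a := by
    have : J.jmul a (∑ r ∈ R, p r) = a := by
      rw [hsum]
      have : J.jmul a J.unit = J.jmul J.unit a := J.comm a J.unit
      rw [this, J.unit_jmul]
    rw [map_sum] at this
    rw [← this]
    exact Finset.sum_congr rfl (fun r _ => (heigp r).symm)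
  exact ⟨R, p, hidem, horth, hsum, hsuma⟩

/-- an idempotent Jordan-commutes with anything it annihilates -/
lemma idem_orth_commute (c d : A) (hc : J.jmul c c = c) (hcd : J.jmul c d = 0) (w : A) :
    J.jmul c (J.jmul d w) = J.jmul d (J.jmul c w) := by
  have h := J.lin1 c d w
  rw [hc, hcd] at h
  simpa using h

/-- the cubic identity for the multiplication operator of an idempotent -/
lemma idem_cubic (p : A) (hp : J.jmul p p = p) (t : A) :
    J.jmul p t = (3:ℝ) • J.jmul p (J.jmul p t) - (2:ℝ) • J.jmul p (J.jmul p (J.jmul p t)) := by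
  have h := J.starp p p t
  rw [hp, hp] at h
  linear_combination (norm := module) h

lemma idem_inner_nonneg (p t : A) (hp : J.jmul p p = p) :
    0 ≤ ⟪t, J.jmul p t⟫ ∧ (⟪t, J.jmul p t⟫ = 0 → J.jmul p t = 0) := by
  set t1 := J.jmul p t with ht1
  set t2 := J.jmul p t1 with ht2
  set t3 := J.jmul p t2 with ht3
  set t4 := J.jmul p t3 with ht4
  have h1 : t1 = (3:ℝ) • t2 - (2:ℝ) • t3 := J.idem_cubic p hp t
  have h2 : t2 = (3:ℝ) • t3 - (2:ℝ) • t4 := J.idem_cubic p hp t1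
  set e1 : A := t1 - t2 with he1
  set e2 : A := (2:ℝ) • t2 - t1 with he2
  have hsym : ∀ x y : A, ⟪J.jmul p x, y⟫ = ⟪x, J.jmul p y⟫ := J.assoc_inner p
  have expand1 : J.jmul p e1 = t2 - t3 := by rw [he1, map_sub]
  have expand2 : J.jmul p (J.jmul p e1) = t3 - t4 := by rw [expand1, map_sub]
  have hQe1 : J.jmul p e1 - J.jmul p (J.jmul p e1) = (4:ℝ)⁻¹ • e1 := by
    rw [expand2, expand1, he1]
    linear_combination (norm := module) (-(4:ℝ)⁻¹) • h1 + (2:ℝ)⁻¹ • h2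
  have expand3 : J.jmul p e2 = (2:ℝ) • t3 - t2 := by rw [he2, map_sub, map_smul]
  have expand4 : J.jmul p (J.jmul p e2) = (2:ℝ) • t4 - t3 := by
    rw [expand3, map_sub, map_smul]
  have hPe2 : (2:ℝ) • J.jmul p (J.jmul p e2) - J.jmul p e2 = e2 := by
    rw [expand4, expand3, he2]
    linear_combination (norm := module) h1 + (2:ℝ) • h2
  have hs1 : ⟪t, J.jmul p e1⟫ = ⟪t1, e1⟫ := (hsym t e1).symm
  have hs2 : ⟪t, J.jmul p (J.jmul p e1)⟫ = ⟪t1, J.jmul p e1⟫ := (hsym t (J.jmul p e1)).symm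
  have hs3 : ⟪t1, J.jmul p e1⟫ = ⟪t2, e1⟫ := (hsym t1 e1).symm
  have hA : ⟪t, e1⟫ = 4 * ⟪e1, e1⟫ := by
    calc ⟪t, e1⟫ = 4 * ⟪t, J.jmul p e1 - J.jmul p (J.jmul p e1)⟫ := by
          rw [hQe1, real_inner_smul_right]; ring
      _ = 4 * (⟪t, J.jmul p e1⟫ - ⟪t, J.jmul p (J.jmul p e1)⟫) := by
          rw [inner_sub_right]
      _ = 4 * (⟪t1, e1⟫ - ⟪t2, e1⟫) := by rw [hs1, hs2, hs3]
      _ = 4 * ⟪t1 - t2, e1⟫ := by rw [inner_sub_left]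
      _ = 4 * ⟪e1, e1⟫ := by rw [← he1]
  have hs4 : ⟪t, J.jmul p e2⟫ = ⟪t1, e2⟫ := (hsym t e2).symm
  have hs5 : ⟪t, J.jmul p (J.jmul p e2)⟫ = ⟪t1, J.jmul p e2⟫ := (hsym t (J.jmul p e2)).symm
  have hs6 : ⟪t1, J.jmul p e2⟫ = ⟪t2, e2⟫ := (hsym t1 e2).symm
  have hB : ⟪t, e2⟫ = ⟪e2, e2⟫ := by
    calc ⟪t, e2⟫ = ⟪t, (2:ℝ) • J.jmul p (J.jmul p e2) - J.jmul p e2⟫ := by rw [hPe2]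
      _ = 2 * ⟪t, J.jmul p (J.jmul p e2)⟫ - ⟪t, J.jmul p e2⟫ := by
          rw [inner_sub_right, real_inner_smul_right]
      _ = 2 * ⟪t2, e2⟫ - ⟪t1, e2⟫ := by rw [hs4, hs5, hs6]
      _ = ⟪(2:ℝ) • t2 - t1, e2⟫ := by rw [inner_sub_left, real_inner_smul_left]
      _ = ⟪e2, e2⟫ := by rw [← he2]
  have hdecomp : t1 = (2:ℝ) • e1 + e2 := by rw [he1, he2]; module
  have hTT : ⟪t, t1⟫ = 8 * ⟪e1, e1⟫ + ⟪e2, e2⟫ := by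
    rw [hdecomp, inner_add_right, real_inner_smul_right, hA, hB]; ring
  clear_value t1 t2 t3 t4 e1 e2
  constructor
  · rw [hTT]
    have := real_inner_self_nonneg (x := e1)
    have := real_inner_self_nonneg (x := e2)
    linarith
  · intro h
    rw [hTT] at h
    have h1' : ⟪e1, e1⟫ = 0 := by
      have := real_inner_self_nonneg (x := e1)
      have := real_inner_self_nonneg (x := e2)
      linarith
    have h2' : ⟪e2, e2⟫ = 0 := by
      have := real_inner_self_nonneg (x := e1)
      linarith
    have he1z : e1 = 0 := inner_self_eq_zero.mp h1'
    have he2z : e2 = 0 := inner_self_eq_zero.mp h2'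
    rw [hdecomp, he1z, he2z]
    simp

/-- inner-orthogonal positive elements Jordan-annihilate each other -/
lemma orth_pos_jmul_zero (c d : A) (hc : c ∈ J.pos) (hd : d ∈ J.pos)
    (h : ⟪c, d⟫ = 0) : J.jmul c d = 0 := by
  classical
  obtain ⟨s, rfl⟩ := hc
  obtain ⟨t, rfl⟩ := hd
  obtain ⟨R, p, hidem, horth, hsum, hsuma⟩ := J.spectral s
  have expand_left : ∀ (g : ℝ → ℝ) (y : A),
      J.jmul (∑ r ∈ R, g r • p r) y = ∑ r ∈ R, g r • J.jmul (p r) y := by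
    intro g y
    rw [map_sum, LinearMap.sum_apply]
    exact Finset.sum_congr rfl fun r _ => by rw [map_smul, LinearMap.smul_apply]
  have hsuma' : (∑ r ∈ R, (fun x => x) r • p r) = s := hsuma
  have hss : J.jmul s s = ∑ r ∈ R, (r * r) • p r := by
    conv_lhs => rw [← hsuma']
    rw [expand_left]
    apply Finset.sum_congr rfl
    intro r hr
    rw [map_sum, Finset.sum_eq_single_of_mem r hr
      (fun q hq hqr => by rw [map_smul, horth r q (Ne.symm hqr), smul_zero]),
      map_smul, hidem r hr, smul_smul]
  have hterm : ∀ r, ⟪p r, J.jmul t t⟫ = ⟪t, J.jmul (p r) t⟫ := by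
    intro r
    rw [real_inner_comm, J.assoc_inner t t (p r), J.comm t (p r)]
  have hinner : ∀ r ∈ R, (0:ℝ) ≤ (r*r) * ⟪t, J.jmul (p r) t⟫ := by
    intro r hr
    have := (J.idem_inner_nonneg (p r) t (hidem r hr)).1
    nlinarith [sq_nonneg r]
  have hzero : ∀ r ∈ R, (r*r) * ⟪t, J.jmul (p r) t⟫ = 0 := by
    have hsum0 : (∑ r ∈ R, (r*r) * ⟪t, J.jmul (p r) t⟫) = 0 := by
      rw [← h, hss, sum_inner]
      exact (Finset.sum_congr rfl fun r hr => by
        rw [real_inner_smul_left, hterm r]).symm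
    exact (Finset.sum_eq_zero_iff_of_nonneg hinner).mp hsum0
  have expand : J.jmul (J.jmul s s) (J.jmul t t)
      = ∑ r ∈ R, (r*r) • J.jmul (p r) (J.jmul t t) := by
    rw [hss]
    exact expand_left (fun r => r * r) (J.jmul t t)
  rw [expand]
  apply Finset.sum_eq_zero
  intro r hr
  rcases eq_or_ne r 0 with h0 | h0
  · rw [h0]; simp
  · have hpt : J.jmul (p r) t = 0 := by
      apply (J.idem_inner_nonneg (p r) t (hidem r hr)).2
      have := hzero r hr
      have hrr : r * r ≠ 0 := mul_ne_zero h0 h0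
      exact (mul_eq_zero.mp this).resolve_left hrr
    have hzz : J.jmul (p r) (J.jmul t t) = 0 := by
      rw [J.idem_orth_commute (p r) t (hidem r hr) hpt t, hpt, map_zero]
    rw [hzz, smul_zero]


end EJA

/-- In a composite `AB` of euclidean Jordan algebras `A` and `B` (a positive, unital
bilinear embedding admitting all product states, with the inner product factoring on
pure tensors), the elements `a ⊗ u_B` and `u_A ⊗ b` operator commute:
`L_{a⊗u_B} ∘ L_{u_A⊗b} = L_{u_A⊗b} ∘ L_{a⊗u_B}`. -/
theorem marginal_elements_operator_commute
    {B C : Type*}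
    [NormedAddCommGroup B] [InnerProductSpace ℝ B] [FiniteDimensional ℝ B]
    [NormedAddCommGroup C] [InnerProductSpace ℝ C] [FiniteDimensional ℝ C]
    (JA : EJA A) (JB : EJA B) (JC : EJA C)
    (π : A →ₗ[ℝ] B →ₗ[ℝ] C)
    (hpos : ∀ a ∈ JA.pos, ∀ b ∈ JB.pos, π a b ∈ JC.pos)
    (hunit : π JA.unit JB.unit = JC.unit)
    (hprod : ∀ (α : A →ₗ[ℝ] ℝ) (β : B →ₗ[ℝ] ℝ), JA.IsState α → JB.IsState β →
      ∃ γ : C →ₗ[ℝ] ℝ, JC.IsState γ ∧ ∀ (a : A) (b : B), γ (π a b) = α a * β b)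
    (hinner : ∀ (a x : A) (b y : B), ⟪π a b, π x y⟫ = ⟪a, x⟫ * ⟪b, y⟫)
    (a : A) (b : B) :
    ∀ z : C, JC.jmul (π a JB.unit) (JC.jmul (π JA.unit b) z)
      = JC.jmul (π JA.unit b) (JC.jmul (π a JB.unit) z) := by
  classical
  intro z
  obtain ⟨RA, pA, hidA, horA, hsumA, hsumaA⟩ := JA.spectral a
  obtain ⟨RB, qB, hidB, horB, hsumB, hsumaB⟩ := JB.spectral b
  set E : ℝ × ℝ → C := fun rs => π (pA rs.1) (qB rs.2) with hE
  set S : Finset (ℝ × ℝ) := RA ×ˢ RB with hS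
  -- inner-product orthogonality of the idempotent families
  have innerA : ∀ r ∈ RA, ∀ r', r ≠ r' → ⟪pA r, pA r'⟫ = 0 := by
    intro r hr r' hne
    rw [← hidA r hr, JA.assoc_inner, horA r r' hne, inner_zero_right]
  have innerB : ∀ s ∈ RB, ∀ s', s ≠ s' → ⟪qB s, qB s'⟫ = 0 := by
    intro s hs s' hne
    rw [← hidB s hs, JB.assoc_inner, horB s s' hne, inner_zero_right]
  -- basic properties of the E family
  have EPos : ∀ P ∈ S, E P ∈ JC.pos := by
    intro P hP
    obtain ⟨h1, h2⟩ := Finset.mem_product.mp hP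
    exact hpos _ ⟨pA P.1, hidA _ h1⟩ _ ⟨qB P.2, hidB _ h2⟩
  have EOrth : ∀ P ∈ S, ∀ Q ∈ S, P ≠ Q → JC.jmul (E P) (E Q) = 0 := by
    intro P hP Q hQ hne
    obtain ⟨hP1, hP2⟩ := Finset.mem_product.mp hP
    apply JC.orth_pos_jmul_zero _ _ (EPos P hP) (EPos Q hQ)
    rw [hE]
    rw [hinner]
    have hsplit : P.1 ≠ Q.1 ∨ P.2 ≠ Q.2 := by
      by_contra hcon
      push_neg at hcon
      exact hne (Prod.ext hcon.1 hcon.2)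
    rcases hsplit with h | h
    · rw [innerA P.1 hP1 Q.1 h, zero_mul]
    · rw [innerB P.2 hP2 Q.2 h, mul_zero]
  have pisum : ∀ (f : ℝ → A) (y : B), π (∑ r ∈ RA, f r) y = ∑ r ∈ RA, π (f r) y :=
    fun f y => by rw [map_sum, LinearMap.sum_apply]
  have Esum : (∑ P ∈ S, E P) = JC.unit := by
    rw [hS, Finset.sum_product, ← hunit]
    conv_rhs => rw [← hsumA, ← hsumB]
    rw [pisum]
    exact Finset.sum_congr rfl fun r hr => by rw [map_sum]
  have Eidem : ∀ P ∈ S, JC.jmul (E P) (E P) = E P := by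
    intro P hP
    have h1 : JC.jmul (E P) JC.unit = E P := by rw [JC.comm]; exact JC.unit_jmul _
    rw [← Esum, map_sum] at h1
    rw [Finset.sum_eq_single_of_mem P hP
      (fun Q hQ hQP => EOrth P hP Q hQ (Ne.symm hQP))] at h1
    exact h1
  have Ecomm : ∀ P ∈ S, ∀ Q ∈ S, ∀ w : C,
      JC.jmul (E P) (JC.jmul (E Q) w) = JC.jmul (E Q) (JC.jmul (E P) w) := by
    intro P hP Q hQ w
    rcases eq_or_ne P Q with rfl | hne
    · rfl
    · exact JC.idem_orth_commute (E P) (E Q) (Eidem P hP) (EOrth P hP Q hQ hne) w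
  -- the marginal elements in terms of the E family
  have hu : π a JB.unit = ∑ P ∈ S, P.1 • E P := by
    conv_lhs => rw [← hsumaA, ← hsumB]
    rw [hS, Finset.sum_product, pisum (fun r => r • pA r)]
    apply Finset.sum_congr rfl
    intro r hr
    rw [map_smul, LinearMap.smul_apply, map_sum, Finset.smul_sum]
  have hv : π JA.unit b = ∑ P ∈ S, P.2 • E P := by
    conv_lhs => rw [← hsumA, ← hsumaB]
    rw [hS, Finset.sum_product, pisum pA]
    apply Finset.sum_congr rfl
    intro r hr
    rw [map_sum]
    exact Finset.sum_congr rfl fun s hs => by rw [map_smul]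
  -- expansion of the double product
  have expandC : ∀ (c d : ℝ × ℝ → ℝ),
      JC.jmul (∑ P ∈ S, c P • E P) (JC.jmul (∑ Q ∈ S, d Q • E Q) z)
        = ∑ P ∈ S, ∑ Q ∈ S, (c P * d Q) • JC.jmul (E P) (JC.jmul (E Q) z) := by
    intro c d
    have jsum : ∀ (f : ℝ × ℝ → C) (y : C),
        JC.jmul (∑ P ∈ S, f P) y = ∑ P ∈ S, JC.jmul (f P) y :=
      fun f y => by rw [map_sum, LinearMap.sum_apply]
    rw [jsum (fun Q => d Q • E Q) z, jsum (fun P => c P • E P)]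
    apply Finset.sum_congr rfl
    intro P hP
    rw [map_smul, LinearMap.smul_apply, map_sum, Finset.smul_sum]
    apply Finset.sum_congr rfl
    intro Q hQ
    rw [show JC.jmul (d Q • E Q) z = d Q • JC.jmul (E Q) z from by
        rw [map_smul, LinearMap.smul_apply],
      map_smul, smul_smul]
  rw [hu, hv, expandC (fun P => P.1) (fun Q => Q.2),
    expandC (fun P => P.2) (fun Q => Q.1), Finset.sum_comm]
  apply Finset.sum_congr rfl
  intro Q hQ
  apply Finset.sum_congr rfl
  intro P hP
  rw [Ecomm P hP Q hQ z, mul_comm]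
end

section
/- For embedded euclidean JC-algebras (A, M_A), (B, M_B), (C, M_C), the associator isomorphism M_A ⊗ (M_B ⊗ M_C) ≅ (M_A ⊗ M_B) ⊗ M_C carries A ⊙ (B ⊙ C) isomorphically onto (A ⊙ B) ⊙ C, where A ⊙ B denotes the Jordan subalgebra of (M_A ⊗ M_B)_sa generated by A ⊗ B. -/
/-!
For unital `A`, every `a ⊗ y` with `a ∈ A` and `y ∈ J(S)` lies in `J(A ⊗ S)`: by induction on `y`,
using `a ⊗ (y ∘ z) = (a ⊗ y) ∘ (1 ⊗ z)`. Hence `J(A ⊗ J(S)) = J(A ⊗ S)`, and symmetrically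
`J(J(S) ⊗ C) = J(S ⊗ C)` for unital `C`. So both sides are Jordan closures of triple tensors,
and the associator, being an algebra isomorphism, maps `J(A ⊗ (B ⊗ C))` onto
`J((A ⊗ B) ⊗ C)`.
-/

open TensorProduct

/-- Membership in the Jordan subalgebra of (the self-adjoint part of) a complex
`*`-algebra generated by a set `S`. -/
inductive JGen {R : Type*} [Ring R] [Algebra ℂ R] (S : Set R) : R → Prop
  | base {a : R} : a ∈ S → JGen S a
  | zero : JGen S 0
  | add {a b : R} : JGen S a → JGen S b → JGen S (a + b)
  | smul (t : ℝ) {a : R} : JGen S a → JGen S ((t : ℂ) • a)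
  | jmul {a b : R} : JGen S a → JGen S b → JGen S ((2 : ℂ)⁻¹ • (a * b + b * a))

/-- The hypotheses making `(A, M)` an embedded euclidean JC-algebra: `M` a
finite-dimensional complex `*`-algebra, `A` a unital Jordan subalgebra of `M_sa`. -/
def IsEJC {M : Type*} [Ring M] [Algebra ℂ M] [StarRing M] (A : Set M) : Prop :=
  (∀ a ∈ A, star a = a) ∧ (1 : M) ∈ A ∧
  (∀ a ∈ A, ∀ b ∈ A, a + b ∈ A) ∧ (∀ (t : ℝ), ∀ a ∈ A, (t : ℂ) • a ∈ A) ∧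
  (∀ a ∈ A, ∀ b ∈ A, (2 : ℂ)⁻¹ • (a * b + b * a) ∈ A)

section

variable {R M N P : Type*} [Ring R] [Algebra ℂ R] [Ring M] [Algebra ℂ M]
  [Ring N] [Algebra ℂ N] [Ring P] [Algebra ℂ P]

def jordanClosure (S : Set R) : Set R := {x | JGen S x}

/-- The canonical tensor product `A ⊙ B = J(A ⊗ B)`. -/
def jordanTensor (A : Set M) (B : Set N) : Set (M ⊗[ℂ] N) :=
  jordanClosure (Set.image2 (· ⊗ₜ[ℂ] ·) A B)

theorem jordanClosure_subset {S T : Set R} (h : S ⊆ jordanClosure T) :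
    jordanClosure S ⊆ jordanClosure T := by
  intro x hx
  induction hx with
  | base hs => exact h hs
  | zero => exact .zero
  | add _ _ iha ihb => exact .add iha ihb
  | smul t _ ih => exact .smul t ih
  | jmul _ _ iha ihb => exact .jmul iha ihb

theorem image_jordanClosure {F : Type*} [FunLike F R M] [AlgHomClass F ℂ R M] (f : F)
    (S : Set R) : f '' jordanClosure S = jordanClosure (f '' S) := by
  ext y
  constructor
  · rintro ⟨x, hx, rfl⟩
    induction hx with
    | base hs => exact .base ⟨_, hs, rfl⟩
    | zero => rw [map_zero]; exact .zero
    | add _ _ iha ihb => rw [map_add]; exact .add iha ihb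
    | smul t _ ih => rw [map_smul]; exact .smul t ih
    | jmul _ _ iha ihb => rw [map_smul, map_add, map_mul, map_mul]; exact .jmul iha ihb
  · intro hy
    induction hy with
    | base hs => exact hs.imp fun x hx => ⟨.base hx.1, hx.2⟩
    | zero => exact ⟨0, .zero, map_zero f⟩
    | add _ _ iha ihb =>
      obtain ⟨⟨a, ha, rfl⟩, ⟨b, hb, rfl⟩⟩ := And.intro iha ihb
      exact ⟨a + b, .add ha hb, map_add f a b⟩
    | smul t _ ih =>
      obtain ⟨a, ha, rfl⟩ := ih
      exact ⟨_, .smul t ha, map_smul f _ a⟩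
    | jmul _ _ iha ihb =>
      obtain ⟨⟨a, ha, rfl⟩, ⟨b, hb, rfl⟩⟩ := And.intro iha ihb
      exact ⟨_, .jmul ha hb, by rw [map_smul, map_add, map_mul, map_mul]⟩

theorem tmul_jordan_product (a : M) (y z : N) :
    a ⊗ₜ[ℂ] ((2 : ℂ)⁻¹ • (y * z + z * y)) =
      (2 : ℂ)⁻¹ • ((a ⊗ₜ[ℂ] y) * ((1 : M) ⊗ₜ[ℂ] z) + ((1 : M) ⊗ₜ[ℂ] z) * (a ⊗ₜ[ℂ] y)) := by
  simp only [Algebra.TensorProduct.tmul_mul_tmul, mul_one, one_mul, tmul_add, tmul_smul]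

theorem tmul_mem_jordanTensor {A : Set M} {S : Set N} (hA : (1 : M) ∈ A) {y : N}
    (hy : JGen S y) : ∀ a ∈ A, a ⊗ₜ[ℂ] y ∈ jordanTensor A S := by
  induction hy with
  | base hs => exact fun a ha => .base ⟨a, ha, _, hs, rfl⟩
  | zero => exact fun _ _ => by rw [tmul_zero]; exact .zero
  | add _ _ iha ihb => exact fun a ha => by rw [tmul_add]; exact .add (iha a ha) (ihb a ha)
  | smul t _ ih => exact fun a ha => by rw [tmul_smul]; exact .smul t (ih a ha)
  | jmul _ _ iha ihb =>
    exact fun a ha => by rw [tmul_jordan_product]; exact .jmul (iha a ha) (ihb 1 hA)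

theorem jordanTensor_jordanClosure_right {A : Set M} (hA : (1 : M) ∈ A) (S : Set N) :
    jordanTensor A (jordanClosure S) = jordanTensor A S := by
  refine (jordanClosure_subset ?_).antisymm (jordanClosure_subset ?_)
  · rintro _ ⟨a, ha, y, hy, rfl⟩
    exact tmul_mem_jordanTensor hA hy a ha
  · rintro _ ⟨a, ha, y, hy, rfl⟩
    exact .base ⟨a, ha, y, .base hy, rfl⟩

theorem image_comm_jordanTensor (A : Set M) (B : Set N) :
    Algebra.TensorProduct.comm ℂ M N '' jordanTensor A B = jordanTensor B A := by
  rw [jordanTensor, image_jordanClosure, Set.image_image2, Set.image2_swap]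
  simp only [Algebra.TensorProduct.comm_tmul]
  rfl

theorem jordanTensor_jordanClosure_left (S : Set M) {B : Set N} (hB : (1 : N) ∈ B) :
    jordanTensor (jordanClosure S) B = jordanTensor S B := by
  rw [← image_comm_jordanTensor B, jordanTensor_jordanClosure_right hB, image_comm_jordanTensor]

theorem image_assoc_symm_jordanTensor (A : Set M) (B : Set N) (C : Set P) :
    (Algebra.TensorProduct.assoc ℂ ℂ ℂ M N P).symm ''
        jordanTensor A (Set.image2 (· ⊗ₜ[ℂ] ·) B C) =
      jordanTensor (Set.image2 (· ⊗ₜ[ℂ] ·) A B) C := by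
  rw [jordanTensor, jordanTensor, image_jordanClosure, Set.image_image2]
  congr 1
  exact (Set.image2_assoc fun a b c =>
    (Algebra.TensorProduct.assoc_symm_tmul ℂ ℂ M a b c).symm).symm

end

theorem canonical_tensor_product_associative_general
    {MA MB MC : Type*}
    [Ring MA] [Algebra ℂ MA] [StarRing MA]
    [Ring MB] [Algebra ℂ MB]
    [Ring MC] [Algebra ℂ MC] [StarRing MC]
    (A : Set MA) (B : Set MB) (C : Set MC)
    (hA : IsEJC A) (hC : IsEJC C) :
    (Algebra.TensorProduct.assoc ℂ ℂ ℂ MA MB MC).symm ''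
        {x : MA ⊗[ℂ] (MB ⊗[ℂ] MC) |
          JGen (Set.image2 (fun a y => a ⊗ₜ[ℂ] y) A
            {y : MB ⊗[ℂ] MC | JGen (Set.image2 (fun b c => b ⊗ₜ[ℂ] c) B C) y}) x}
      = {x : (MA ⊗[ℂ] MB) ⊗[ℂ] MC |
          JGen (Set.image2 (fun y c => y ⊗ₜ[ℂ] c)
            {y : MA ⊗[ℂ] MB | JGen (Set.image2 (fun a b => a ⊗ₜ[ℂ] b) A B) y} C) x} := by
  change _ '' jordanTensor A (jordanClosure _) = jordanTensor (jordanClosure _) C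
  rw [jordanTensor_jordanClosure_right hA.2.1, jordanTensor_jordanClosure_left _ hC.2.1,
    image_assoc_symm_jordanTensor]

/-- The associator isomorphism `M_A ⊗ (M_B ⊗ M_C) ≅ (M_A ⊗ M_B) ⊗ M_C` carries
`A ⊙ (B ⊙ C)` isomorphically onto `(A ⊙ B) ⊙ C`, where `A ⊙ B` is the Jordan subalgebra
of `(M_A ⊗ M_B)_sa` generated by `A ⊗ B`. -/
theorem canonical_tensor_product_associative
    {MA MB MC : Type*}
    [Ring MA] [Algebra ℂ MA] [StarRing MA] [StarModule ℂ MA] [FiniteDimensional ℂ MA]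
    [Ring MB] [Algebra ℂ MB] [StarRing MB] [StarModule ℂ MB] [FiniteDimensional ℂ MB]
    [Ring MC] [Algebra ℂ MC] [StarRing MC] [StarModule ℂ MC] [FiniteDimensional ℂ MC]
    (A : Set MA) (B : Set MB) (C : Set MC)
    (hA : IsEJC A) (hB : IsEJC B) (hC : IsEJC C) :
    (Algebra.TensorProduct.assoc ℂ ℂ ℂ MA MB MC).symm ''
        {x : MA ⊗[ℂ] (MB ⊗[ℂ] MC) |
          JGen (Set.image2 (fun a y => a ⊗ₜ[ℂ] y) A
            {y : MB ⊗[ℂ] MC | JGen (Set.image2 (fun b c => b ⊗ₜ[ℂ] c) B C) y}) x}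
      = {x : (MA ⊗[ℂ] MB) ⊗[ℂ] MC |
          JGen (Set.image2 (fun y c => y ⊗ₜ[ℂ] c)
            {y : MA ⊗[ℂ] MB | JGen (Set.image2 (fun a b => a ⊗ₜ[ℂ] b) A B) y} C) x} :=
  canonical_tensor_product_associative_general A B C hA hC
end
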